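/- Let X be a reflexive real Banach space and T : X ⇉ X* a non-enlargeable maximal monotone operator with (0, 0) ∈ T. Then the set A = T^⊢ is self-cancelling, A ⊂ T, T = A^⊢, every self-cancelling set B ⊂ T satisfies B ⊂ A (i.e. A is the maximal self-cancelling operator contained in T), and A is maximal with respect to inclusion in the family of subsets B ⊂ X × X* with T = B^⊢. -/

import Mathlib

/-- A subset of `X × X*` is monotone if `⟨x - y, x* - y*⟩ ≥ 0` for all its pairs of points. -/
def IsMonotoneSet {X : Type*} [NormedAddCommGroup X] [NormedSpace ℝ X]
    (T : Set (X × (X →L[ℝ] ℝ))) : Prop :=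
  ∀ p ∈ T, ∀ q ∈ T, 0 ≤ (p.2 - q.2) (p.1 - q.1)

/-- A subset of `X × X*` is maximal monotone if it is monotone and maximal with respect
to inclusion among monotone subsets. -/
def IsMaximalMonotone {X : Type*} [NormedAddCommGroup X] [NormedSpace ℝ X]
    (T : Set (X × (X →L[ℝ] ℝ))) : Prop :=
  IsMonotoneSet T ∧ ∀ S, IsMonotoneSet S → T ⊆ S → S = T

/-- The ε-enlargement of `T : X ⇉ X*`. -/
def enlargement {X : Type*} [NormedAddCommGroup X] [NormedSpace ℝ X]
    (T : Set (X × (X →L[ℝ] ℝ))) (ε : ℝ) : Set (X × (X →L[ℝ] ℝ)) :=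
  {p | ∀ q ∈ T, (p.2 - q.2) (p.1 - q.1) ≥ -ε}

/-- `B^⊢ = {(y, y*) : ⟨x, y*⟩ + ⟨y, x*⟩ = 0 for all (x, x*) ∈ B}`. -/
def vdash {X : Type*} [NormedAddCommGroup X] [NormedSpace ℝ X]
    (B : Set (X × (X →L[ℝ] ℝ))) : Set (X × (X →L[ℝ] ℝ)) :=
  {q | ∀ p ∈ B, p.2 q.1 + q.2 p.1 = 0}

/-- `A ⊆ X × X*` is self-cancelling if it is a linear subspace of `X × X*` and the
duality product vanishes on it. -/
def IsSelfCancelling {X : Type*} [NormedAddCommGroup X] [NormedSpace ℝ X]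
    (A : Set (X × (X →L[ℝ] ℝ))) : Prop :=
  (∃ S : Submodule ℝ (X × (X →L[ℝ] ℝ)), A = ↑S) ∧ ∀ p ∈ A, p.2 p.1 = 0

/-!
Non-enlargeability makes `T` convex (with `ε` read off from the expansion of the duality
product of a convex combination) and closed, and a scaling argument upgrades this, given
`(0, 0) ∈ T`, to `T` being a closed linear subspace with `⟨x, x*⟩ ≥ 0` on it. Then
`T^⊢ ⊆ T`, and `T^⊢⊢ ⊆ T` by Hahn–Banach: by reflexivity every functional on `X × X*` is
`(x, x*) ↦ ⟨x, y*⟩ + ⟨y, x*⟩` for some `(y, y*)`, so a functional separating a point from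
`T` is a point of `T^⊢`. The remaining claims only use that `⊢` comes from a symmetric form.
-/

section

variable {X : Type*} [NormedAddCommGroup X] [NormedSpace ℝ X]

def IsNonEnlargeable (T : Set (X × (X →L[ℝ] ℝ))) : Prop :=
  ∀ ε : ℝ, 0 ≤ ε → enlargement T ε = T

section Pairing

variable (p q : X × (X →L[ℝ] ℝ))

lemma sub_apply_sub : (p - q).2 (p - q).1 = p.2 p.1 - (p.2 q.1 + q.2 p.1) + q.2 q.1 := by
  simp only [Prod.fst_sub, Prod.snd_sub, sub_apply, map_sub]
  ring

lemma smul_apply_smul (c : ℝ) : (c • p).2 (c • p).1 = c ^ 2 * p.2 p.1 := by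
  simp only [Prod.smul_fst, Prod.smul_snd, smul_apply, map_smul, smul_eq_mul]
  ring

end Pairing

lemma isClosed_enlargement (T : Set (X × (X →L[ℝ] ℝ))) (ε : ℝ) :
    IsClosed (enlargement T ε) := by
  have hcont : Continuous fun p : X × (X →L[ℝ] ℝ) => p.2 p.1 :=
    isBoundedBilinearMap_apply.continuous.comp (continuous_snd.prodMk continuous_fst)
  simp only [enlargement, Set.ofPred_forall]
  exact isClosed_biInter fun q _ =>
    isClosed_le continuous_const (hcont.comp (continuous_id.sub continuous_const))

lemma subset_vdash_vdash (B : Set (X × (X →L[ℝ] ℝ))) : B ⊆ vdash (vdash B) :=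
  fun p hp q hq => by linarith [hq p hp]

def vdashSubmodule (B : Set (X × (X →L[ℝ] ℝ))) : Submodule ℝ (X × (X →L[ℝ] ℝ)) where
  carrier := vdash B
  add_mem' {a b} ha hb p hp := by
    simp only [Prod.fst_add, Prod.snd_add, add_apply, map_add]
    linarith [ha p hp, hb p hp]
  zero_mem' p _ := by simp
  smul_mem' c a ha p hp := by
    simp only [Prod.smul_fst, Prod.smul_snd, smul_apply, map_smul, smul_eq_mul]
    linear_combination c * ha p hp

lemma isSelfCancelling_vdash_of_subset {B : Set (X × (X →L[ℝ] ℝ))} (h : vdash B ⊆ B) :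
    IsSelfCancelling (vdash B) :=
  ⟨⟨vdashSubmodule B, rfl⟩, fun w hw => by linarith [hw w (h hw)]⟩

lemma eq_zero_of_forall_nonneg_sub_mul {a b : ℝ} (h : ∀ t : ℝ, 0 ≤ a - t * b) : b = 0 := by
  by_contra hb
  linarith [h ((a + 1) / b), div_mul_cancel₀ (a + 1) hb]

lemma IsMonotoneSet.subset_vdash_of_isSelfCancelling {T B : Set (X × (X →L[ℝ] ℝ))}
    (hT : IsMonotoneSet T) (hB : IsSelfCancelling B) (hBT : B ⊆ T) : B ⊆ vdash T := by
  obtain ⟨⟨S, rfl⟩, hS⟩ := hB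
  intro w hw p hp
  refine eq_zero_of_forall_nonneg_sub_mul (a := p.2 p.1) fun t => ?_
  have hmono : 0 ≤ (p - t • w).2 (p - t • w).1 := hT p hp (t • w) (hBT (S.smul_mem t hw))
  rw [sub_apply_sub, smul_apply_smul, hS w hw] at hmono
  simp only [Prod.smul_fst, Prod.smul_snd, map_smul, smul_apply, smul_eq_mul] at hmono
  linarith

lemma Submodule.exists_dual_eq_zero_ne_zero {E : Type*} [NormedAddCommGroup E] [NormedSpace ℝ E]
    (S : Submodule ℝ E) (hS : IsClosed (S : Set E)) {w : E} (hw : w ∉ S) :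
    ∃ g : StrongDual ℝ E, (∀ v ∈ S, g v = 0) ∧ g w ≠ 0 := by
  obtain ⟨g, u, hgw, hgS⟩ := geometric_hahn_banach_point_closed S.convex hS hw
  have hu : u < 0 := by simpa using hgS 0 S.zero_mem
  refine ⟨g, fun v hv => ?_, by linarith⟩
  by_contra hv0
  have := hgS (((u - 1) / g v) • v) (S.smul_mem _ hv)
  rw [map_smul, smul_eq_mul, div_mul_cancel₀ _ hv0] at this
  linarith

lemma exists_dual_eq_fst_add_snd
    (hrefl : Function.Surjective (NormedSpace.inclusionInDoubleDual ℝ X))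
    (g : StrongDual ℝ (X × (X →L[ℝ] ℝ))) :
    ∃ y : X × (X →L[ℝ] ℝ), ∀ p, g p = y.2 p.1 + p.2 y.1 := by
  obtain ⟨y, hy⟩ := hrefl (g.comp (.inr ℝ X (X →L[ℝ] ℝ)))
  refine ⟨(y, g.comp (.inl ℝ X (X →L[ℝ] ℝ))), fun p => ?_⟩
  have hy' := congrArg (· p.2) hy
  simp only [NormedSpace.dual_def, ContinuousLinearMap.comp_apply,
    ContinuousLinearMap.inr_apply] at hy'
  rw [hy', ContinuousLinearMap.comp_apply, ContinuousLinearMap.inl_apply, ← map_add,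
    Prod.mk_add_mk, add_zero, zero_add]

lemma vdash_vdash_subset
    (hrefl : Function.Surjective (NormedSpace.inclusionInDoubleDual ℝ X))
    (S : Submodule ℝ (X × (X →L[ℝ] ℝ))) (hS : IsClosed (S : Set (X × (X →L[ℝ] ℝ)))) :
    vdash (vdash (S : Set (X × (X →L[ℝ] ℝ)))) ⊆ S := by
  intro w hw
  by_contra hwS
  obtain ⟨g, hgS, hgw⟩ := S.exists_dual_eq_zero_ne_zero hS hwS
  obtain ⟨y, hy⟩ := exists_dual_eq_fst_add_snd hrefl g
  have hyS : y ∈ vdash (S : Set (X × (X →L[ℝ] ℝ))) := fun p hp => by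
    rw [add_comm, ← hy, hgS p hp]
  exact hgw (hy w ▸ hw y hyS)

section NonEnlargeable

variable {T : Set (X × (X →L[ℝ] ℝ))}

lemma IsNonEnlargeable.enlargement_subset (hne : IsNonEnlargeable T) {ε : ℝ} (hε : 0 ≤ ε) :
    enlargement T ε ⊆ T :=
  (hne ε hε).subset

lemma IsNonEnlargeable.isClosed (hne : IsNonEnlargeable T) : IsClosed T :=
  hne 0 le_rfl ▸ isClosed_enlargement T 0

lemma IsNonEnlargeable.isMonotoneSet (hne : IsNonEnlargeable T) : IsMonotoneSet T :=
  fun p hp q hq => by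
    have hp' : p ∈ enlargement T 0 := (hne 0 le_rfl).symm ▸ hp
    simpa using hp' q hq

lemma IsMonotoneSet.apply_self_nonneg (hT : IsMonotoneSet T) (h0 : (0, 0) ∈ T)
    {p : X × (X →L[ℝ] ℝ)} (hp : p ∈ T) : 0 ≤ p.2 p.1 := by
  simpa using hT p hp 0 h0

lemma IsNonEnlargeable.convex (hne : IsNonEnlargeable T) : Convex ℝ T := by
  intro p hp q hq s t hs ht hst
  obtain rfl : t = 1 - s := by linarith
  have hpq := hne.isMonotoneSet p hp q hq
  refine hne.enlargement_subset (mul_nonneg (mul_nonneg hs ht) hpq) fun r hr => ?_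
  have hpr := hne.isMonotoneSet p hp r hr
  have hqr := hne.isMonotoneSet q hq r hr
  -- `Q (s a + t b) = s Q a + t Q b - s t Q (a - b)` for `s + t = 1`, `Q z = z.2 z.1`,
  -- `a = p - r`, `b = q - r`: this is where `ε = s t Q (p - q)` comes from.
  have hexpand : (s • p + (1 - s) • q - r).2 (s • p + (1 - s) • q - r).1 =
      s * (p.2 - r.2) (p.1 - r.1) + (1 - s) * (q.2 - r.2) (q.1 - r.1)
        - s * (1 - s) * (p.2 - q.2) (p.1 - q.1) := by
    simp only [Prod.fst_sub, Prod.snd_sub, Prod.fst_add, Prod.snd_add, Prod.smul_fst,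
      Prod.smul_snd, sub_apply, add_apply, smul_apply, map_sub, map_add, map_smul,
      smul_eq_mul]
    ring
  change _ ≤ (s • p + (1 - s) • q - r).2 (s • p + (1 - s) • q - r).1
  rw [hexpand]
  nlinarith [mul_nonneg hs hpr, mul_nonneg ht hqr]

lemma IsNonEnlargeable.smul_mem_of_one_le (hne : IsNonEnlargeable T) (h0 : (0, 0) ∈ T)
    {p : X × (X →L[ℝ] ℝ)} (hp : p ∈ T) {c : ℝ} (hc : 1 ≤ c) : c • p ∈ T := by
  have hc0 : c ≠ 0 := by positivity
  refine hne.enlargement_subset le_rfl fun r hr => ?_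
  have hr' : c⁻¹ • r ∈ T :=
    hne.convex.smul_mem_of_zero_mem h0 hr ⟨by positivity, inv_le_one_of_one_le₀ hc⟩
  have hmono := hne.isMonotoneSet p hp _ hr'
  have hscale : c • p - r = c • (p - c⁻¹ • r) := by rw [smul_sub, smul_inv_smul₀ hc0]
  change _ ≤ (c • p - r).2 (c • p - r).1
  rw [hscale, smul_apply_smul]
  simpa using mul_nonneg (sq_nonneg c) hmono

lemma IsNonEnlargeable.smul_mem_of_nonneg (hne : IsNonEnlargeable T) (h0 : (0, 0) ∈ T)
    {p : X × (X →L[ℝ] ℝ)} (hp : p ∈ T) {c : ℝ} (hc : 0 ≤ c) : c • p ∈ T := by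
  rcases le_total c 1 with hc1 | hc1
  · exact hne.convex.smul_mem_of_zero_mem h0 hp ⟨hc, hc1⟩
  · exact hne.smul_mem_of_one_le h0 hp hc1

lemma IsNonEnlargeable.add_mem (hne : IsNonEnlargeable T) (h0 : (0, 0) ∈ T)
    {p q : X × (X →L[ℝ] ℝ)} (hp : p ∈ T) (hq : q ∈ T) : p + q ∈ T := by
  have hmid : (1 / 2 : ℝ) • p + (1 / 2 : ℝ) • q ∈ T :=
    hne.convex hp hq (by norm_num) (by norm_num) (by norm_num)
  convert hne.smul_mem_of_nonneg h0 hmid zero_le_two using 1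
  rw [smul_add, smul_smul, smul_smul]
  norm_num

lemma IsNonEnlargeable.neg_mem (hne : IsNonEnlargeable T) (h0 : (0, 0) ∈ T)
    {p : X × (X →L[ℝ] ℝ)} (hp : p ∈ T) : -p ∈ T := by
  refine hne.enlargement_subset le_rfl fun r hr => ?_
  have hpr := hne.isMonotoneSet.apply_self_nonneg h0 (hne.add_mem h0 hp hr)
  change _ ≤ (-p - r).2 (-p - r).1
  rw [← neg_add']
  simp only [Prod.fst_neg, Prod.snd_neg, neg_apply, map_neg, neg_neg, neg_zero]
  exact hpr

lemma IsNonEnlargeable.smul_mem (hne : IsNonEnlargeable T) (h0 : (0, 0) ∈ T)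
    {p : X × (X →L[ℝ] ℝ)} (hp : p ∈ T) (c : ℝ) : c • p ∈ T := by
  rcases le_total 0 c with hc | hc
  · exact hne.smul_mem_of_nonneg h0 hp hc
  · have hneg := hne.neg_mem h0 (hne.smul_mem_of_nonneg h0 hp (neg_nonneg.2 hc))
    rwa [show -((-c) • p) = c • p by module] at hneg

def IsNonEnlargeable.toSubmodule (hne : IsNonEnlargeable T) (h0 : (0, 0) ∈ T) :
    Submodule ℝ (X × (X →L[ℝ] ℝ)) where
  carrier := T
  add_mem' := hne.add_mem h0
  zero_mem' := h0
  smul_mem' c _ hp := hne.smul_mem h0 hp c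

lemma IsNonEnlargeable.vdash_subset (hne : IsNonEnlargeable T) (h0 : (0, 0) ∈ T) :
    vdash T ⊆ T := fun w hw =>
  hne.enlargement_subset (abs_nonneg (w.2 w.1)) fun q hq => by
    have hq0 := hne.isMonotoneSet.apply_self_nonneg h0 hq
    change _ ≤ (w - q).2 (w - q).1
    rw [sub_apply_sub]
    linarith [neg_abs_le (w.2 w.1), hw q hq]

end NonEnlargeable

end

theorem vdash_of_nonEnlargeable_general {X : Type*}
    [NormedAddCommGroup X] [NormedSpace ℝ X]
    (hrefl : Function.Surjective (NormedSpace.inclusionInDoubleDual ℝ X))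
    (T : Set (X × (X →L[ℝ] ℝ)))
    (hne : ∀ ε : ℝ, 0 ≤ ε → enlargement T ε = T) (h0 : (0, 0) ∈ T) :
    IsSelfCancelling (vdash T) ∧ vdash T ⊆ T ∧ T = vdash (vdash T) ∧
      (∀ B, IsSelfCancelling B → B ⊆ T → B ⊆ vdash T) ∧
      (∀ B : Set (X × (X →L[ℝ] ℝ)), T = vdash B → vdash T ⊆ B → B = vdash T) := by
  have hne : IsNonEnlargeable T := hne
  have hsub : vdash T ⊆ T := hne.vdash_subset h0
  refine ⟨isSelfCancelling_vdash_of_subset hsub, hsub, ?_,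
    fun B hB hBT => hne.isMonotoneSet.subset_vdash_of_isSelfCancelling hB hBT,
    fun B hTB hAB => ?_⟩
  · exact (subset_vdash_vdash T).antisymm
      (vdash_vdash_subset hrefl (hne.toSubmodule h0) hne.isClosed)
  · refine Set.Subset.antisymm ?_ hAB
    rw [hTB]
    exact subset_vdash_vdash B

/-- For a non-enlargeable maximal monotone `T : X ⇉ X*` on a reflexive real Banach
space with `(0, 0) ∈ T`, the set `A = T^⊢` is self-cancelling, `A ⊆ T`, `T = A^⊢`,
`A` contains every self-cancelling subset of `T`, and `A` is maximal among the sets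
`B` with `T = B^⊢`. -/
theorem vdash_of_nonEnlargeable {X : Type*}
    [NormedAddCommGroup X] [NormedSpace ℝ X] [CompleteSpace X]
    (hrefl : Function.Surjective (NormedSpace.inclusionInDoubleDual ℝ X))
    (T : Set (X × (X →L[ℝ] ℝ))) (hT : IsMaximalMonotone T)
    (hne : ∀ ε : ℝ, 0 ≤ ε → enlargement T ε = T) (h0 : (0, 0) ∈ T) :
    IsSelfCancelling (vdash T) ∧ vdash T ⊆ T ∧ T = vdash (vdash T) ∧
      (∀ B, IsSelfCancelling B → B ⊆ T → B ⊆ vdash T) ∧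
      (∀ B : Set (X × (X →L[ℝ] ℝ)), T = vdash B → vdash T ⊆ B → B = vdash T) :=
  vdash_of_nonEnlargeable_general hrefl T hne h0
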